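/- arXiv:2302.05042 — 3 statements merged into one kernel-verified Lean document; each statement's English description precedes it below -/
import Mathlib

section
/- Let α ≥ 1, a > 1 and b > √a. Then the function z ↦ θ(α; z) − b·θ(aα; z) is unbounded below on the upper half-plane ℍ: for every M ∈ ℝ there exists z ∈ ℍ with θ(α; z) − b·θ(aα; z) < M. In particular, its minimum over ℍ is not attained. -/
open Real Complex

/-- The lattice theta function `θ(α; z) = Σ_{(m,n) ∈ ℤ²} exp(−π α |m z + n|² / Im z)`. -/
noncomputable def latticeTheta (α : ℝ) (z : ℂ) : ℝ :=
  ∑' p : ℤ × ℤ, Real.exp (-π * α * ‖(p.1 : ℂ) * z + (p.2 : ℂ)‖ ^ 2 / z.im)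

/-- `W_b(α; z) = Σ_{(m,n) ∈ ℤ²} (|m z + n|²/Im z − b/α) exp(−π α |m z + n|² / Im z)`. -/
noncomputable def latticeW (b α : ℝ) (z : ℂ) : ℝ :=
  ∑' p : ℤ × ℤ,
    (‖(p.1 : ℂ) * z + (p.2 : ℂ)‖ ^ 2 / z.im - b / α) *
      Real.exp (-π * α * ‖(p.1 : ℂ) * z + (p.2 : ℂ)‖ ^ 2 / z.im)

/-- The hexagonal point `e^{iπ/3} = 1/2 + i√3/2`. -/
noncomputable def hexPoint : ℂ := ⟨1 / 2, Real.sqrt 3 / 2⟩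

/-!
On the imaginary axis the lattice sum factors into two one-dimensional theta series,
`θ(α; iy) = ϑ(αy) ϑ(α/y)` with `ϑ(t) = Σₙ exp(-π t n²)`, and the modular relation
`ϑ(1/t) = √t ϑ(t)` turns this into `θ(α; iy) = √(y/α) ϑ(αy) ϑ(y/α)`. Since `ϑ(t) → 1` as
`t → ∞`, we get `θ(α; iy) ~ √(y/α)` as `y → ∞`, hence
`θ(α; iy) - b θ(aα; iy) ~ (1 - b/√a) √(y/α) → -∞` because `b > √a`.
-/

open Filter Topology

noncomputable def thetaSeries (t : ℝ) : ℝ := ∑' n : ℤ, rexp (-π * t * (n : ℝ) ^ 2)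

lemma cexp_pi_mul_I_mul_sq_mul_ofReal_mul_I (t : ℝ) (n : ℤ) :
    cexp (π * I * (n : ℂ) ^ 2 * (t * I)) = rexp (-π * t * (n : ℝ) ^ 2) := by
  rw [Complex.ofReal_exp]
  congr 1
  push_cast
  linear_combination (π * (n : ℂ) ^ 2 * t) * Complex.I_mul_I

lemma summable_exp_neg_pi_mul_sq {t : ℝ} (ht : 0 < t) :
    Summable fun n : ℤ => rexp (-π * t * (n : ℝ) ^ 2) := by
  have h : Summable fun n : ℤ => jacobiTheta₂_term n 0 (t * I) := by
    rw [summable_jacobiTheta₂_term_iff]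
    simpa using ht
  refine Complex.summable_ofReal.mp (h.congr fun n => ?_)
  rw [jacobiTheta₂_term, ← cexp_pi_mul_I_mul_sq_mul_ofReal_mul_I]
  congr 1
  ring

lemma jacobiTheta_ofReal_mul_I (t : ℝ) : jacobiTheta (t * I) = thetaSeries t := by
  rw [jacobiTheta, thetaSeries, Complex.ofReal_tsum]
  exact tsum_congr (cexp_pi_mul_I_mul_sq_mul_ofReal_mul_I t)

lemma thetaSeries_inv {t : ℝ} (ht : 0 < t) : thetaSeries t⁻¹ = √t * thetaSeries t := by
  let τ : UpperHalfPlane := ⟨t * I, by simpa using ht⟩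
  have h := jacobiTheta_S_smul τ
  have hS : ((ModularGroup.S • τ : UpperHalfPlane) : ℂ) = (t⁻¹ : ℝ) * I := by
    rw [UpperHalfPlane.modular_S_smul]
    change (-((t : ℂ) * I))⁻¹ = _
    rw [inv_neg, mul_inv, Complex.inv_I]
    push_cast
    ring
  have hsqrt : (-I * τ) ^ (1 / 2 : ℂ) = (√t : ℂ) := by
    rw [show -I * (τ : ℂ) = t by
        change -I * ((t : ℂ) * I) = t
        linear_combination -(t : ℂ) * Complex.I_mul_I,
      Real.sqrt_eq_rpow, Complex.ofReal_cpow ht.le]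
    norm_num
  rw [hS, hsqrt, jacobiTheta_ofReal_mul_I, show (τ : ℂ) = t * I from rfl,
    jacobiTheta_ofReal_mul_I] at h
  exact_mod_cast h

lemma tendsto_thetaSeries_atTop : Tendsto thetaSeries atTop (𝓝 1) := by
  have hI : Tendsto (fun t : ℝ => (t : ℂ) * I) atTop (comap im atTop) :=
    tendsto_comap_iff.mpr <| tendsto_id.congr fun t => by simp
  have hexp : Tendsto (fun τ : ℂ => rexp (-π * τ.im)) (comap im atTop) (𝓝 0) :=
    tendsto_exp_atBot.comp <|
      (tendsto_id.const_mul_atTop_of_neg (neg_neg_of_pos pi_pos)).comp tendsto_comap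
  have h := ((isBigO_at_im_infty_jacobiTheta_sub_one.trans_tendsto hexp).comp hI).add_const 1
  simp only [Function.comp_def, jacobiTheta_ofReal_mul_I, sub_add_cancel, zero_add] at h
  simpa [Function.comp_def] using (Complex.continuous_re.tendsto _).comp h

lemma latticeTheta_ofReal_mul_I {α y : ℝ} (hα : 0 < α) (hy : 0 < y) :
    latticeTheta α (y * I) = thetaSeries (α * y) * thetaSeries (α / y) := by
  have hterm (p : ℤ × ℤ) :
      rexp (-π * α * ‖(p.1 : ℂ) * (y * I) + (p.2 : ℂ)‖ ^ 2 / ((y : ℂ) * I).im) =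
        rexp (-π * (α * y) * (p.1 : ℝ) ^ 2) * rexp (-π * (α / y) * (p.2 : ℝ) ^ 2) := by
    have hnorm : ‖(p.1 : ℂ) * (y * I) + (p.2 : ℂ)‖ ^ 2 = (p.2 : ℝ) ^ 2 + (p.1 * y) ^ 2 := by
      rw [Complex.sq_norm, ← Complex.normSq_add_mul_I]
      push_cast
      congr 1
      ring
    rw [← Real.exp_add, hnorm, Complex.mul_I_im, Complex.ofReal_re]
    congr 1
    field_simp
    ring
  have hf := summable_exp_neg_pi_mul_sq (mul_pos hα hy)
  have hg := summable_exp_neg_pi_mul_sq (div_pos hα hy)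
  rw [latticeTheta, tsum_congr hterm, thetaSeries, thetaSeries]
  exact (hf.tsum_mul_tsum hg (hf.mul_of_nonneg hg (fun _ => (exp_pos _).le)
    (fun _ => (exp_pos _).le))).symm

lemma tendsto_latticeTheta_ofReal_mul_I_div_sqrt {α : ℝ} (hα : 0 < α) :
    Tendsto (fun y : ℝ => latticeTheta α (y * I) / √y) atTop (𝓝 (√α)⁻¹) := by
  have hyα : Tendsto (fun y : ℝ => y / α) atTop atTop := tendsto_id.atTop_div_const hα
  have h := ((tendsto_thetaSeries_atTop.comp (tendsto_id.const_mul_atTop hα)).mul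
    (tendsto_thetaSeries_atTop.comp hyα)).const_mul (√α)⁻¹
  rw [mul_one, mul_one] at h
  refine h.congr' ?_
  filter_upwards [eventually_gt_atTop 0] with y hy
  have hinv : thetaSeries (α / y) = √(y / α) * thetaSeries (y / α) := by
    rw [← thetaSeries_inv (div_pos hy hα), inv_div]
  have hy' : √y ≠ 0 := (sqrt_pos.mpr hy).ne'
  rw [latticeTheta_ofReal_mul_I hα hy, hinv, sqrt_div hy.le]
  simp only [Function.comp_apply, id]
  field_simp

theorem theta_difference_unbounded_below (α a b : ℝ) (hα : 1 ≤ α) (ha : 1 < a)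
    (hb : Real.sqrt a < b) :
    ∀ M : ℝ, ∃ z : ℂ, 0 < z.im ∧ latticeTheta α z - b * latticeTheta (a * α) z < M := by
  intro M
  have hα0 : 0 < α := by linarith
  have haα : 0 < a * α := mul_pos (by linarith) hα0
  set f : ℝ → ℝ := fun y => latticeTheta α (y * I) - b * latticeTheta (a * α) (y * I)
  have hlim : (√α)⁻¹ - b * (√(a * α))⁻¹ < 0 := by
    have hsa : 0 < √a := sqrt_pos.mpr (by linarith)
    have hsplit : b * (√(a * α))⁻¹ = b / √a * (√α)⁻¹ := by
      rw [sqrt_mul (by linarith : 0 ≤ a), mul_inv]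
      ring
    rw [hsplit, sub_neg]
    exact lt_mul_of_one_lt_left (by positivity) ((one_lt_div hsa).mpr hb)
  have hf_div : Tendsto (fun y => f y / √y) atTop (𝓝 ((√α)⁻¹ - b * (√(a * α))⁻¹)) :=
    ((tendsto_latticeTheta_ofReal_mul_I_div_sqrt hα0).sub
      ((tendsto_latticeTheta_ofReal_mul_I_div_sqrt haα).const_mul b)).congr
      fun y => by simp only [f]; ring
  have hf : Tendsto f atTop atBot := by
    refine (tendsto_sqrt_atTop.atTop_mul_neg hlim hf_div).congr' ?_
    filter_upwards [eventually_gt_atTop 0] with y hy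
    have : √y ≠ 0 := (sqrt_pos.mpr hy).ne'
    field_simp
  obtain ⟨y, hyM, hy⟩ :=
    ((hf.eventually (eventually_lt_atBot M)).and (eventually_gt_atTop 0)).exists
  exact ⟨y * I, by simpa using hy, hyM⟩
end

section
/- For every X with 0 < X ≤ 1/2 and every Y ∈ ℝ, one has |Σ_{n ∈ ℤ} (n − Y)³ e^{−π(n−Y)²/X}| ≤ (1/4)·|Σ_{n ∈ ℤ} (n − Y) e^{−π(n−Y)²/X}|. -/
/-!
With `c = π / X ≥ 2π` and `φ_a(t) = t (t² + a) e^{-ct²}`, it suffices to show that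
`Σ φ_{-1/4}(n - Y) ≥ 0` and `Σ φ_{1/4}(n - Y) ≤ 0`, and by periodicity and oddness in `Y` only
for `0 ≤ Y ≤ 1/2`. Pairing the terms at `±(k + 1) - Y`, or shifting that pairing by one,
turns each sum into `∓φ(Y)`, possibly `φ(1 - Y)`, and differences `φ(k + α) - φ(k + β)`.
On `[1, ∞)` both functions decrease, so most differences have the right sign. Where they do
not, `1 - e^{-x} ≤ x` bounds each of them, these bounds shrink by a factor `10` from one `k`
to the next, and their sum is absorbed by the leading term `∓φ(Y)`. What remains,
`φ(1 + Y) ≤ φ(1 - Y)` for small `Y` and `φ(1 - Y) ≤ φ(Y)` for larger `Y`, becomes a polynomial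
inequality once `e^x` is replaced by a Taylor polynomial.
-/

open Real Set

noncomputable def cubicGaussian (a c t : ℝ) : ℝ := t * (t ^ 2 + a) * exp (-(c * t ^ 2))

noncomputable def gaussMoment (k : ℕ) (c Y : ℝ) : ℝ :=
  ∑' n : ℤ, ((n : ℝ) - Y) ^ k * exp (-(c * ((n : ℝ) - Y) ^ 2))

noncomputable def gapBound (a c w v : ℝ) : ℝ :=
  c * (v ^ 2 - w ^ 2) * (v * (v ^ 2 + a)) * exp (-(c * w ^ 2))

section Summation

variable {c : ℝ}

theorem tsum_int_sub_add_intCast (f : ℝ → ℝ) (Y : ℝ) (m : ℤ) :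
    ∑' n : ℤ, f (n - (Y + m)) = ∑' n : ℤ, f (n - Y) := by
  rw [← (Equiv.addRight m).tsum_eq]
  exact tsum_congr fun n => by simp only [Equiv.coe_addRight]; push_cast; ring_nf

theorem tsum_int_sub_neg (f : ℝ → ℝ) (Y : ℝ) :
    ∑' n : ℤ, f (n - -Y) = ∑' n : ℤ, f (-(n - Y)) := by
  rw [← (Equiv.neg ℤ).tsum_eq]
  exact tsum_congr fun n => by simp only [Equiv.neg_apply]; push_cast; ring_nf

theorem tsum_int_sub_eq_of_odd {f : ℝ → ℝ} (hf : ∀ t, f (-t) = -f t) (Y : ℝ)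
    (h₁ : Summable fun k : ℕ => f (k + (1 - Y))) (h₂ : Summable fun k : ℕ => f (k + (1 + Y))) :
    ∑' n : ℤ, f (n - Y) = -f Y + ∑' k : ℕ, (f (k + (1 - Y)) - f (k + (1 + Y))) := by
  have e₁ (k : ℕ) : f (((k + 1 : ℤ) : ℝ) - Y) = f (k + (1 - Y)) := by push_cast; ring_nf
  have e₂ (k : ℕ) : f (((-(k + 1) : ℤ) : ℝ) - Y) = -f (k + (1 + Y)) := by
    rw [← hf]; push_cast; ring_nf
  rw [tsum_of_add_one_of_neg_add_one (f := fun n : ℤ => f (n - Y))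
    (by simpa only [e₁] using h₁) (by simpa only [e₂] using h₂.neg)]
  simp only [e₁, e₂, tsum_neg, Int.cast_zero, zero_sub, hf, h₁.tsum_sub h₂]
  ring

theorem tsum_int_sub_eq_of_odd' {f : ℝ → ℝ} (hf : ∀ t, f (-t) = -f t) (Y : ℝ)
    (h₁ : Summable fun k : ℕ => f (k + (1 - Y))) (h₂ : Summable fun k : ℕ => f (k + (1 + Y))) :
    ∑' n : ℤ, f (n - Y) = -f Y + f (1 - Y) + ∑' k : ℕ, (f (k + (2 - Y)) - f (k + (1 + Y))) := by
  have h₁' : Summable fun k : ℕ => f (k + (2 - Y)) :=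
    ((summable_nat_add_iff 1).2 h₁).congr fun k => by push_cast; ring_nf
  rw [tsum_int_sub_eq_of_odd hf Y h₁ h₂, h₁.tsum_sub h₂, h₁'.tsum_sub h₂, h₁.tsum_eq_zero_add]
  simp only [Nat.cast_zero, zero_add, Nat.cast_add, Nat.cast_one]
  ring_nf

theorem tsum_le_of_le_of_succ_le_mul {f u : ℕ → ℝ} {ρ : ℝ} (hf : Summable f)
    (hfu : ∀ k, f k ≤ u k) (hρ₀ : 0 ≤ ρ) (hρ₁ : ρ < 1) (hu : ∀ k, u (k + 1) ≤ ρ * u k) :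
    ∑' k, f k ≤ u 0 / (1 - ρ) := by
  have hgeom (k : ℕ) : u k ≤ u 0 * ρ ^ k := by
    induction k with
    | zero => simp
    | succ k ih => calc
        u (k + 1) ≤ ρ * u k := hu k
        _ ≤ ρ * (u 0 * ρ ^ k) := mul_le_mul_of_nonneg_left ih hρ₀
        _ = u 0 * ρ ^ (k + 1) := by ring
  calc ∑' k, f k ≤ ∑' k, u 0 * ρ ^ k :=
        hf.tsum_le_tsum (fun k => (hfu k).trans (hgeom k))
          ((summable_geometric_of_lt_one hρ₀ hρ₁).mul_left _)
    _ = u 0 / (1 - ρ) := by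
        rw [tsum_mul_left, tsum_geometric_of_lt_one hρ₀ hρ₁, div_eq_mul_inv]

theorem summable_pow_mul_gaussian_int_sub (k : ℕ) (hc : 0 < c) (Y : ℝ) :
    Summable fun n : ℤ => ((n : ℝ) - Y) ^ k * exp (-(c * ((n : ℝ) - Y) ^ 2)) := by
  refine (HurwitzKernelBounds.summable_f_int k (-Y) (t := c / π) (by positivity)).of_norm_bounded
    fun n => ?_
  rw [HurwitzKernelBounds.f_int, norm_mul, norm_pow, Real.norm_eq_abs, Real.norm_eq_abs,
    Real.abs_exp, ← sub_eq_add_neg]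
  field_simp
  rfl

theorem summable_cubicGaussian_nat_add (a : ℝ) (hc : 0 < c) (b : ℝ) :
    Summable fun n : ℕ => cubicGaussian a c (n + b) := by
  have h (k : ℕ) := HurwitzKernelBounds.summable_f_nat k b (t := c / π) (by positivity)
  refine ((h 3).add ((h 1).mul_left a)).congr fun n => ?_
  simp only [HurwitzKernelBounds.f_nat, cubicGaussian]
  field_simp

theorem tsum_cubicGaussian_int_sub (a : ℝ) (hc : 0 < c) (Y : ℝ) :
    ∑' n : ℤ, cubicGaussian a c (n - Y) = gaussMoment 3 c Y + a * gaussMoment 1 c Y := by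
  rw [gaussMoment, gaussMoment, ← tsum_mul_left, ← (summable_pow_mul_gaussian_int_sub 3 hc Y).tsum_add
    ((summable_pow_mul_gaussian_int_sub 1 hc Y).mul_left a)]
  exact tsum_congr fun n => by simp only [cubicGaussian]; ring

theorem gaussMoment_add_intCast (k : ℕ) (c Y : ℝ) (m : ℤ) :
    gaussMoment k c (Y + m) = gaussMoment k c Y :=
  tsum_int_sub_add_intCast (fun t => t ^ k * exp (-(c * t ^ 2))) Y m

theorem gaussMoment_neg {k : ℕ} (hk : Odd k) (c Y : ℝ) :
    gaussMoment k c (-Y) = -gaussMoment k c Y := by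
  rw [gaussMoment, tsum_int_sub_neg (fun t => t ^ k * exp (-(c * t ^ 2))), gaussMoment, ← tsum_neg]
  exact tsum_congr fun n => by rw [hk.neg_pow, neg_sq]; ring

end Summation

section Shape

variable {a c : ℝ}

theorem cubicGaussian_neg (a c t : ℝ) : cubicGaussian a c (-t) = -cubicGaussian a c t := by
  simp only [cubicGaussian, neg_sq]; ring

theorem hasDerivAt_cubicGaussian (a c t : ℝ) :
    HasDerivAt (cubicGaussian a c)
      ((3 * t ^ 2 + a - 2 * c * t ^ 2 * (t ^ 2 + a)) * exp (-(c * t ^ 2))) t := by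
  have h := ((hasDerivAt_id' t).fun_mul ((hasDerivAt_pow 2 t).add_const a)).fun_mul
    ((hasDerivAt_pow 2 t).const_mul c).fun_neg.exp
  exact h.congr_deriv (by push_cast; ring)

theorem antitoneOn_cubicGaussian (ha₀ : -1 / 4 ≤ a) (ha₁ : a ≤ 1 / 4) (hc : 3 ≤ c) :
    AntitoneOn (cubicGaussian a c) (Ici 1) := by
  have hd (t : ℝ) := hasDerivAt_cubicGaussian a c t
  refine antitoneOn_of_deriv_nonpos (convex_Ici 1)
    (fun t _ => (hd t).continuousAt.continuousWithinAt)
    (fun t _ => (hd t).differentiableAt.differentiableWithinAt) fun t ht => ?_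
  rw [interior_Ici, mem_Ioi] at ht
  rw [(hd t).deriv]
  refine mul_nonpos_of_nonpos_of_nonneg ?_ (exp_pos _).le
  have ht2 : 1 ≤ t ^ 2 := by nlinarith
  nlinarith [mul_le_mul_of_nonneg_left hc (by nlinarith : (0 : ℝ) ≤ t ^ 2 * (t ^ 2 + a))]

theorem cubicGaussian_le_of_le_mul_exp {s t : ℝ}
    (h : t * (t ^ 2 + a) ≤ s * (s ^ 2 + a) * exp (c * (t ^ 2 - s ^ 2))) :
    cubicGaussian a c t ≤ cubicGaussian a c s := by
  have e : exp (-(c * s ^ 2)) = exp (c * (t ^ 2 - s ^ 2)) * exp (-(c * t ^ 2)) := by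
    rw [← exp_add]; ring_nf
  rw [cubicGaussian, cubicGaussian, e, ← mul_assoc]
  exact mul_le_mul_of_nonneg_right h (exp_pos _).le

theorem cubicGaussian_sub_le_gapBound {w v : ℝ} (ha : -1 / 4 ≤ a) (hw : 1 / 2 ≤ w) (hwv : w ≤ v) :
    cubicGaussian a c w - cubicGaussian a c v ≤ gapBound a c w v := by
  have hp : w * (w ^ 2 + a) ≤ v * (v ^ 2 + a) := by
    nlinarith [mul_nonneg (sub_nonneg.2 hwv) (by nlinarith : (0 : ℝ) ≤ v ^ 2 + v * w + w ^ 2 + a)]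
  have hv : 0 ≤ v * (v ^ 2 + a) := by nlinarith
  have hE : exp (-(c * w ^ 2)) - exp (-(c * v ^ 2)) ≤
      c * (v ^ 2 - w ^ 2) * exp (-(c * w ^ 2)) := by
    have e : exp (-(c * v ^ 2)) = exp (-(c * w ^ 2)) * exp (-(c * (v ^ 2 - w ^ 2))) := by
      rw [← exp_add]; ring_nf
    rw [e]
    nlinarith [exp_pos (-(c * w ^ 2)), add_one_le_exp (-(c * (v ^ 2 - w ^ 2)))]
  calc cubicGaussian a c w - cubicGaussian a c v
      ≤ v * (v ^ 2 + a) * (exp (-(c * w ^ 2)) - exp (-(c * v ^ 2))) := by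
        simp only [cubicGaussian]; nlinarith [exp_pos (-(c * w ^ 2))]
    _ ≤ gapBound a c w v := by unfold gapBound; nlinarith

theorem gapBound_succ_le {w v : ℝ} (ha : -1 / 4 ≤ a) (hc : 6 ≤ c) (hw : 1 / 2 ≤ w) (hwv : w ≤ v)
    (hv : 1 ≤ v) : gapBound a c (w + 1) (v + 1) ≤ gapBound a c w v / 10 := by
  have hsq : (v + 1) ^ 2 - (w + 1) ^ 2 ≤ 3 * (v ^ 2 - w ^ 2) := by nlinarith
  have hcube : (v + 1) * ((v + 1) ^ 2 + a) ≤ 10 * (v * (v ^ 2 + a)) := by nlinarith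
  have hexp : exp (-(c * (w + 1) ^ 2)) ≤ exp (-(c * w ^ 2)) / 300 := by
    have h300 : (300 : ℝ) ≤ exp 12 :=
      le_trans (by norm_num [Finset.sum_range_succ, Nat.factorial])
        (sum_le_exp_of_nonneg (by norm_num) 5)
    have e : exp (-(c * (w + 1) ^ 2)) = exp (-(c * w ^ 2)) / exp (c * (2 * w + 1)) := by
      rw [← exp_sub]; ring_nf
    rw [e]
    gcongr
    exact h300.trans (exp_le_exp.2 (by nlinarith))
  have hsq₀ : 0 ≤ v ^ 2 - w ^ 2 := by nlinarith
  have hv' : 0 ≤ v * (v ^ 2 + a) := by nlinarith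
  unfold gapBound
  calc c * ((v + 1) ^ 2 - (w + 1) ^ 2) * ((v + 1) * ((v + 1) ^ 2 + a)) * exp (-(c * (w + 1) ^ 2))
      ≤ c * (3 * (v ^ 2 - w ^ 2)) * (10 * (v * (v ^ 2 + a))) * (exp (-(c * w ^ 2)) / 300) := by
        gcongr
        nlinarith
    _ = _ := by ring

theorem tsum_cubicGaussian_sub_le {α β : ℝ} (ha : -1 / 4 ≤ a) (hc : 6 ≤ c) (hα : 1 / 2 ≤ α)
    (hαβ : α ≤ β) (hβ : 1 ≤ β) :
    ∑' k : ℕ, (cubicGaussian a c (k + α) - cubicGaussian a c (k + β)) ≤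
      10 / 9 * gapBound a c α β := by
  have hc₀ : 0 < c := by linarith
  have hk (k : ℕ) : (0 : ℝ) ≤ k := Nat.cast_nonneg k
  have h := tsum_le_of_le_of_succ_le_mul (u := fun k : ℕ => gapBound a c (k + α) (k + β))
    ((summable_cubicGaussian_nat_add a hc₀ α).sub (summable_cubicGaussian_nat_add a hc₀ β))
    (fun k => cubicGaussian_sub_le_gapBound ha (by linarith [hk k]) (by linarith))
    (by norm_num : (0 : ℝ) ≤ 1 / 10) (by norm_num) fun k => by
      have := gapBound_succ_le ha hc (w := k + α) (v := k + β) (by linarith [hk k])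
        (by linarith) (by linarith [hk k])
      push_cast
      rw [add_right_comm _ 1 α, add_right_comm _ 1 β]
      linarith
  convert h using 1
  simp only [Nat.cast_zero, zero_add]
  ring

end Shape

section Estimates

variable {c : ℝ}

theorem mul_exp_neg_mul_le {β c₀ : ℝ} (hβ : 0 ≤ β) (hc₀ : 1 ≤ β * c₀) (hc : c₀ ≤ c) :
    c * exp (-(β * c)) ≤ c₀ * exp (-(β * c₀)) := by
  have hc₀pos : 0 < c₀ := by nlinarith
  have h : c ≤ c₀ * exp (β * (c - c₀)) := by
    nlinarith [add_one_le_exp (β * (c - c₀)), mul_nonneg hβ (sub_nonneg.2 hc)]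
  have e : exp (-(β * c₀)) = exp (β * (c - c₀)) * exp (-(β * c)) := by
    rw [← exp_add]; ring_nf
  rw [e, ← mul_assoc]
  exact mul_le_mul_of_nonneg_right h (exp_pos _).le

theorem cubicGaussian_one_add_le_one_sub {Y : ℝ} (hc : 6 ≤ c) (hY₀ : 0 ≤ Y) (hY : Y ≤ 1 / 4) :
    cubicGaussian (-1 / 4) c (1 + Y) ≤ cubicGaussian (-1 / 4) c (1 - Y) := by
  refine cubicGaussian_le_of_le_mul_exp ?_
  have htaylor : 1 + 24 * Y + (24 * Y) ^ 2 / 2 ≤ exp (c * ((1 + Y) ^ 2 - (1 - Y) ^ 2)) :=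
    (quadratic_le_exp_of_nonneg (by positivity)).trans (exp_le_exp.2 (by nlinarith))
  have hp : 0 ≤ (1 - Y) * ((1 - Y) ^ 2 + -1 / 4) := by nlinarith
  calc (1 + Y) * ((1 + Y) ^ 2 + -1 / 4)
      ≤ (1 - Y) * ((1 - Y) ^ 2 + -1 / 4) * (1 + 24 * Y + (24 * Y) ^ 2 / 2) := by
        nlinarith [mul_nonneg hY₀ (sub_nonneg.2 hY),
          mul_nonneg (mul_nonneg hY₀ hY₀) (sub_nonneg.2 hY)]
    _ ≤ _ := mul_le_mul_of_nonneg_left htaylor hp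

theorem cubicGaussian_one_sub_le_self {Y : ℝ} (hc : 6 ≤ c) (hY₀ : 1 / 20 ≤ Y) (hY : Y ≤ 1 / 2) :
    cubicGaussian (1 / 4) c (1 - Y) ≤ cubicGaussian (1 / 4) c Y := by
  refine cubicGaussian_le_of_le_mul_exp ?_
  obtain ⟨u, rfl⟩ : ∃ u, Y = (1 - u) / 2 := ⟨1 - 2 * Y, by ring⟩
  have hu₀ : 0 ≤ u := by linarith
  have hu₁ : u ≤ 9 / 10 := by linarith
  have htaylor : ∑ i ∈ Finset.range 6, (6 * u) ^ i / i.factorial ≤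
      exp (c * ((1 - (1 - u) / 2) ^ 2 - ((1 - u) / 2) ^ 2)) :=
    (sum_le_exp_of_nonneg (by positivity) 6).trans (exp_le_exp.2 (by nlinarith))
  -- the right side minus the left side of the first `calc` step is `u / 8` times this polynomial
  have hr : 0 ≤ 4 + 12 * u + 16 * u ^ 2 + 12 * u ^ 3 + 18 / 5 * u ^ 4 - 666 / 5 * u ^ 5 +
      702 / 5 * u ^ 6 - 324 / 5 * u ^ 7 := by
    nlinarith [mul_nonneg hu₀ (sub_nonneg.2 hu₁), pow_nonneg hu₀ 3, pow_nonneg hu₀ 4,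
      pow_nonneg hu₀ 5, mul_nonneg (pow_nonneg hu₀ 3) (sub_nonneg.2 hu₁),
      mul_nonneg (pow_nonneg hu₀ 4) (sub_nonneg.2 hu₁),
      mul_nonneg (pow_nonneg hu₀ 5) (sub_nonneg.2 hu₁),
      mul_nonneg (pow_nonneg hu₀ 6) (sub_nonneg.2 hu₁),
      mul_nonneg (pow_nonneg hu₀ 5) (sq_nonneg (u - 9 / 10))]
  have hp : 0 ≤ (1 - u) / 2 * (((1 - u) / 2) ^ 2 + 1 / 4) := by nlinarith
  calc (1 - (1 - u) / 2) * ((1 - (1 - u) / 2) ^ 2 + 1 / 4)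
      ≤ (1 - u) / 2 * (((1 - u) / 2) ^ 2 + 1 / 4) *
          ∑ i ∈ Finset.range 6, (6 * u) ^ i / i.factorial := by
        simp only [Finset.sum_range_succ, Finset.sum_range_zero, Nat.factorial]
        nlinarith [mul_nonneg hu₀ hr]
    _ ≤ _ := mul_le_mul_of_nonneg_left htaylor hp

theorem gapBound_le_cubicGaussian {Y : ℝ} (hc : 6 ≤ c) (hY₀ : 0 ≤ Y) (hY : Y ≤ 1 / 20) :
    10 / 9 * gapBound (1 / 4) c (1 - Y) (1 + Y) ≤ cubicGaussian (1 / 4) c Y := by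
  have hE : exp (-(c * (1 - Y) ^ 2)) ≤ exp (-(c * Y ^ 2)) * exp (-(9 / 10 * c)) := by
    rw [← exp_add]; exact exp_le_exp.2 (by nlinarith)
  have hcE : c * exp (-(9 / 10 * c)) ≤ 6 / 200 := by
    have h200 : (200 : ℝ) ≤ exp (9 / 10 * 6) :=
      le_trans (by norm_num [Finset.sum_range_succ, Nat.factorial])
        (sum_le_exp_of_nonneg (by norm_num) 10)
    refine (mul_exp_neg_mul_le (by norm_num) (by norm_num) hc).trans ?_
    rw [exp_neg]
    linarith [inv_anti₀ (by norm_num) h200]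
  have hp : (1 + Y) * ((1 + Y) ^ 2 + 1 / 4) ≤ 3 / 2 := by nlinarith
  unfold gapBound cubicGaussian
  calc 10 / 9 * (c * ((1 + Y) ^ 2 - (1 - Y) ^ 2) * ((1 + Y) * ((1 + Y) ^ 2 + 1 / 4)) *
        exp (-(c * (1 - Y) ^ 2)))
      = 10 / 9 * (4 * Y) * ((1 + Y) * ((1 + Y) ^ 2 + 1 / 4)) *
          (c * exp (-(c * (1 - Y) ^ 2))) := by ring
    _ ≤ 10 / 9 * (4 * Y) * (3 / 2) * (c * (exp (-(c * Y ^ 2)) * exp (-(9 / 10 * c)))) := by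
        gcongr
    _ = 10 / 9 * (4 * Y) * (3 / 2) * (c * exp (-(9 / 10 * c))) * exp (-(c * Y ^ 2)) := by ring
    _ ≤ 10 / 9 * (4 * Y) * (3 / 2) * (6 / 200) * exp (-(c * Y ^ 2)) := by gcongr
    _ ≤ Y * (Y ^ 2 + 1 / 4) * exp (-(c * Y ^ 2)) :=
        mul_le_mul_of_nonneg_right (by nlinarith [pow_nonneg hY₀ 3]) (exp_pos _).le

theorem gapBound_le_neg_cubicGaussian {Y : ℝ} (hc : 6 ≤ c) (hY₀ : 1 / 4 ≤ Y) (hY : Y ≤ 1 / 2) :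
    10 / 9 * gapBound (-1 / 4) c (1 + Y) (2 - Y) ≤ -cubicGaussian (-1 / 4) c Y := by
  have hE : exp (-(c * (1 + Y) ^ 2)) ≤ exp (-(c * Y ^ 2)) * exp (-(3 / 2 * c)) := by
    rw [← exp_add]; exact exp_le_exp.2 (by nlinarith)
  have hcE : c * exp (-(3 / 2 * c)) ≤ 6 / 3000 := by
    have h3000 : (3000 : ℝ) ≤ exp (3 / 2 * 6) :=
      le_trans (by norm_num [Finset.sum_range_succ, Nat.factorial])
        (sum_le_exp_of_nonneg (by norm_num) 10)
    refine (mul_exp_neg_mul_le (by norm_num) (by norm_num) hc).trans ?_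
    rw [exp_neg]
    linarith [inv_anti₀ (by norm_num) h3000]
  have hp : (2 - Y) * ((2 - Y) ^ 2 + -1 / 4) ≤ 15 / 2 := by nlinarith
  have hY' : 0 ≤ 1 - 2 * Y := by linarith
  unfold gapBound cubicGaussian
  calc 10 / 9 * (c * ((2 - Y) ^ 2 - (1 + Y) ^ 2) * ((2 - Y) * ((2 - Y) ^ 2 + -1 / 4)) *
        exp (-(c * (1 + Y) ^ 2)))
      = 10 / 9 * (3 * (1 - 2 * Y)) * ((2 - Y) * ((2 - Y) ^ 2 + -1 / 4)) *
          (c * exp (-(c * (1 + Y) ^ 2))) := by ring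
    _ ≤ 10 / 9 * (3 * (1 - 2 * Y)) * (15 / 2) *
          (c * (exp (-(c * Y ^ 2)) * exp (-(3 / 2 * c)))) := by
        gcongr
    _ = 10 / 9 * (3 * (1 - 2 * Y)) * (15 / 2) * (c * exp (-(3 / 2 * c))) * exp (-(c * Y ^ 2)) := by
        ring
    _ ≤ 10 / 9 * (3 * (1 - 2 * Y)) * (15 / 2) * (6 / 3000) * exp (-(c * Y ^ 2)) := by
        gcongr
    _ ≤ -(Y * (Y ^ 2 + -1 / 4)) * exp (-(c * Y ^ 2)) :=
        mul_le_mul_of_nonneg_right (by nlinarith) (exp_pos _).le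
    _ = -(Y * (Y ^ 2 + -1 / 4) * exp (-(c * Y ^ 2))) := by ring

end Estimates

section Signs

variable {c : ℝ}

theorem tsum_cubicGaussian_neg_quarter_nonneg {Y : ℝ} (hc : 6 ≤ c) (hY₀ : 0 ≤ Y) (hY : Y ≤ 1 / 2) :
    0 ≤ ∑' n : ℤ, cubicGaussian (-1 / 4) c (n - Y) := by
  have hs (b : ℝ) := summable_cubicGaussian_nat_add (-1 / 4) (by linarith : 0 < c) b
  have hk (k : ℕ) : (0 : ℝ) ≤ k := Nat.cast_nonneg k
  have hφY : 0 ≤ -cubicGaussian (-1 / 4) c Y :=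
    neg_nonneg.2 <| mul_nonpos_of_nonpos_of_nonneg
      (mul_nonpos_of_nonneg_of_nonpos hY₀ (by nlinarith)) (exp_pos _).le
  rcases le_total Y (1 / 4) with hsmall | hlarge
  · rw [tsum_int_sub_eq_of_odd (cubicGaussian_neg _ _) Y (hs _) (hs _)]
    refine add_nonneg hφY (tsum_nonneg fun k => sub_nonneg.2 ?_)
    rcases k with _ | k
    · simpa using cubicGaussian_one_add_le_one_sub hc hY₀ hsmall
    · exact antitoneOn_cubicGaussian (by norm_num) (by norm_num) (by linarith)
        (mem_Ici.2 (by push_cast; linarith [hk k])) (mem_Ici.2 (by push_cast; linarith [hk k]))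
        (by linarith)
  · rw [tsum_int_sub_eq_of_odd' (cubicGaussian_neg _ _) Y (hs _) (hs _)]
    have hφ₁ : 0 ≤ cubicGaussian (-1 / 4) c (1 - Y) := by
      unfold cubicGaussian
      exact mul_nonneg (by nlinarith) (exp_pos _).le
    have htail := tsum_cubicGaussian_sub_le (a := -1 / 4) (by norm_num) hc (α := 1 + Y)
      (β := 2 - Y) (by linarith) (by linarith) (by linarith)
    rw [← neg_le_neg_iff, ← tsum_neg] at htail
    simp only [neg_sub] at htail
    linarith [gapBound_le_neg_cubicGaussian hc hlarge hY]

theorem tsum_cubicGaussian_quarter_nonpos {Y : ℝ} (hc : 6 ≤ c) (hY₀ : 0 ≤ Y) (hY : Y ≤ 1 / 2) :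
    ∑' n : ℤ, cubicGaussian (1 / 4) c (n - Y) ≤ 0 := by
  have hs (b : ℝ) := summable_cubicGaussian_nat_add (1 / 4) (by linarith : 0 < c) b
  have hk (k : ℕ) : (0 : ℝ) ≤ k := Nat.cast_nonneg k
  rcases le_total Y (1 / 20) with hsmall | hlarge
  · rw [tsum_int_sub_eq_of_odd (cubicGaussian_neg _ _) Y (hs _) (hs _)]
    linarith [tsum_cubicGaussian_sub_le (a := 1 / 4) (by norm_num) hc (α := 1 - Y) (β := 1 + Y)
      (by linarith) (by linarith) (by linarith), gapBound_le_cubicGaussian hc hY₀ hsmall]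
  · rw [tsum_int_sub_eq_of_odd' (cubicGaussian_neg _ _) Y (hs _) (hs _)]
    have htail : ∑' k : ℕ, (cubicGaussian (1 / 4) c (k + (2 - Y)) -
        cubicGaussian (1 / 4) c (k + (1 + Y))) ≤ 0 :=
      tsum_nonpos fun k => sub_nonpos.2 <|
        antitoneOn_cubicGaussian (by norm_num) (by norm_num) (by linarith)
          (mem_Ici.2 (by linarith [hk k])) (mem_Ici.2 (by linarith [hk k])) (by linarith)
    linarith [cubicGaussian_one_sub_le_self hc hlarge hY]

theorem abs_gaussMoment_three_le_of_le_half {Y : ℝ} (hc : 6 ≤ c) (hY₀ : 0 ≤ Y) (hY : Y ≤ 1 / 2) :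
    |gaussMoment 3 c Y| ≤ 1 / 4 * |gaussMoment 1 c Y| := by
  have hA := tsum_cubicGaussian_neg_quarter_nonneg hc hY₀ hY
  have hB := tsum_cubicGaussian_quarter_nonpos hc hY₀ hY
  rw [tsum_cubicGaussian_int_sub _ (by linarith)] at hA hB
  rw [abs_of_nonpos (by linarith : gaussMoment 1 c Y ≤ 0)]
  exact abs_le.2 ⟨by linarith, by linarith⟩

theorem abs_gaussMoment_three_le (hc : 6 ≤ c) (Y : ℝ) :
    |gaussMoment 3 c Y| ≤ 1 / 4 * |gaussMoment 1 c Y| := by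
  obtain ⟨Z, m, hZ, rfl⟩ : ∃ (Z : ℝ) (m : ℤ), |Z| ≤ 1 / 2 ∧ Y = Z + m :=
    ⟨Y - round Y, round Y, abs_sub_round Y, by ring⟩
  rw [gaussMoment_add_intCast, gaussMoment_add_intCast]
  rcases le_total 0 Z with hZ₀ | hZ₀
  · exact abs_gaussMoment_three_le_of_le_half hc hZ₀ (abs_le.1 hZ).2
  · rw [← neg_neg Z, gaussMoment_neg (k := 3) (by decide), gaussMoment_neg odd_one, abs_neg, abs_neg]
    exact abs_gaussMoment_three_le_of_le_half hc (by linarith) (by linarith [(abs_le.1 hZ).1])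

end Signs

theorem cubic_gaussian_sum_bound (X Y : ℝ) (hX0 : 0 < X) (hX : X ≤ 1 / 2) :
    |∑' n : ℤ, ((n : ℝ) - Y) ^ 3 * Real.exp (-π * ((n : ℝ) - Y) ^ 2 / X)| ≤
      (1 / 4) * |∑' n : ℤ, ((n : ℝ) - Y) * Real.exp (-π * ((n : ℝ) - Y) ^ 2 / X)| := by
  have hc : 6 ≤ π / X := by
    rw [le_div_iff₀ hX0]
    nlinarith [pi_gt_three]
  have e (k : ℕ) : gaussMoment k (π / X) Y =
      ∑' n : ℤ, ((n : ℝ) - Y) ^ k * Real.exp (-π * ((n : ℝ) - Y) ^ 2 / X) :=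
    tsum_congr fun n => by ring_nf
  simpa only [e, pow_one] using abs_gaussMoment_three_le hc Y
end

section
/- For every positive integer n and every Y ∈ ℝ with sin(2πY) ≠ 0, the function g_n(Y) := sin(2nπY)/sin(2πY) is differentiable at Y and satisfies |g_n'(Y)| ≤ (2π/3)(n−1)n(n+1)·|sin(2πY)|. -/
open Real Finset

/-! Away from the zeros of `sin`, `sin (n x) / sin x = ∑_{j<n} cos (c_j x)` with the integer
frequencies `c_j = 2j + 1 - n` (a telescoping sum), so its derivative is `-∑ c_j sin (c_j x)`.
Since `|sin (c x)| ≤ |c| |sin x|` for integers `c`, the derivative is at most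
`(∑ c_j²) |sin x| = n (n² - 1) / 3 · |sin x|`; the substitution `x = 2πY` contributes `2π`. -/

theorem abs_sin_nat_mul_le (k : ℕ) (x : ℝ) : |sin (k * x)| ≤ k * |sin x| := by
  induction k with
  | zero => simp
  | succ k ih =>
    calc |sin ((k + 1 : ℕ) * x)| = |sin (k * x) * cos x + cos (k * x) * sin x| := by
          rw [← sin_add]; push_cast; ring_nf
      _ ≤ |sin (k * x)| * |cos x| + |cos (k * x)| * |sin x| := by
          simpa only [abs_mul] using abs_add_le (sin (k * x) * cos x) (cos (k * x) * sin x)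
      _ ≤ |sin (k * x)| * 1 + 1 * |sin x| := by
          gcongr
          · exact abs_cos_le_one x
          · exact abs_cos_le_one _
      _ ≤ (k + 1 : ℕ) * |sin x| := by push_cast; linarith

theorem abs_sin_int_mul_le (m : ℤ) (x : ℝ) : |sin (m * x)| ≤ |(m : ℝ)| * |sin x| := by
  obtain ⟨k, rfl | rfl⟩ := Int.eq_nat_or_neg m <;>
    simpa [neg_mul, sin_neg] using abs_sin_nat_mul_le k x

theorem abs_sum_int_mul_sin_int_mul_le {ι : Type*} (s : Finset ι) (c : ι → ℤ) (x : ℝ) :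
    |∑ j ∈ s, (c j : ℝ) * sin (c j * x)| ≤ (∑ j ∈ s, (c j : ℝ) ^ 2) * |sin x| := by
  rw [sum_mul]
  refine (abs_sum_le_sum_abs _ _).trans (sum_le_sum fun j _ => ?_)
  calc |(c j : ℝ) * sin (c j * x)| = |(c j : ℝ)| * |sin (c j * x)| := abs_mul _ _
    _ ≤ |(c j : ℝ)| * (|(c j : ℝ)| * |sin x|) := by gcongr; exact abs_sin_int_mul_le _ _
    _ = (c j : ℝ) ^ 2 * |sin x| := by rw [← sq_abs (c j : ℝ)]; ring

theorem hasDerivAt_sum_cos_mul {ι : Type*} (s : Finset ι) (c : ι → ℝ) (x : ℝ) :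
    HasDerivAt (fun x => ∑ j ∈ s, cos (c j * x)) (-∑ j ∈ s, c j * sin (c j * x)) x := by
  rw [← sum_neg_distrib]
  refine HasDerivAt.fun_sum fun j _ => ?_
  have h := ((hasDerivAt_id' x).const_mul (c j)).cos
  rw [mul_one] at h
  exact h.congr_deriv (by ring)

def dirichletFreq (n j : ℕ) : ℤ := 2 * j + 1 - n

theorem sin_mul_sum_cos_dirichletFreq (n : ℕ) (x : ℝ) :
    sin x * ∑ j ∈ range n, cos (dirichletFreq n j * x) = sin (n * x) := by
  have hstep : ∀ j ∈ range n, sin x * cos (dirichletFreq n j * x)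
      = (sin ((2 * (j + 1 : ℕ) - n) * x) - sin ((2 * j - n) * x)) / 2 := by
    intro j _
    rw [sin_sub_sin, dirichletFreq]
    push_cast
    ring_nf
  rw [mul_sum, sum_congr rfl hstep, ← sum_div,
    sum_range_sub (fun j : ℕ => sin ((2 * j - n) * x))]
  push_cast
  rw [show (2 * (n : ℝ) - n) * x = n * x by ring, show (2 * 0 - (n : ℝ)) * x = -(n * x) by ring,
    sin_neg]
  ring

theorem sum_range_two_mul_add_sq (n : ℕ) (a : ℝ) :
    ∑ j ∈ range n, (2 * j + a) ^ 2 =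
      n * (a ^ 2 + 2 * (n - 1) * a + 2 * (n - 1) * (2 * n - 1) / 3) := by
  induction n with
  | zero => simp
  | succ n ih => rw [sum_range_succ, ih]; push_cast; ring

theorem sum_dirichletFreq_sq (n : ℕ) :
    ∑ j ∈ range n, (dirichletFreq n j : ℝ) ^ 2 = n * (n ^ 2 - 1) / 3 := by
  simp only [dirichletFreq, Int.cast_sub, Int.cast_add, Int.cast_mul, Int.cast_ofNat,
    Int.cast_natCast, Int.cast_one, add_sub_assoc]
  rw [sum_range_two_mul_add_sq]
  ring

theorem sin_nat_mul_div_sin_eventuallyEq (n : ℕ) {x : ℝ} (hx : sin x ≠ 0) :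
    (fun x => sin (n * x) / sin x) =ᶠ[nhds x]
      fun x => ∑ j ∈ range n, cos (dirichletFreq n j * x) := by
  filter_upwards [continuous_sin.continuousAt.eventually_ne hx] with y hy
  rw [div_eq_iff hy, ← sin_mul_sum_cos_dirichletFreq, mul_comm]

theorem exists_hasDerivAt_sin_nat_mul_div_sin (n : ℕ) {x : ℝ} (hx : sin x ≠ 0) :
    ∃ d, HasDerivAt (fun x => sin (n * x) / sin x) d x ∧
      |d| ≤ n * (n ^ 2 - 1) / 3 * |sin x| := by
  refine ⟨_, (hasDerivAt_sum_cos_mul _ _ x).congr_of_eventuallyEq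
    (sin_nat_mul_div_sin_eventuallyEq n hx), ?_⟩
  rw [abs_neg, ← sum_dirichletFreq_sq]
  exact abs_sum_int_mul_sin_int_mul_le _ _ x

theorem dirichlet_quotient_derivative_bound_general (n : ℕ) (Y : ℝ)
    (hY : Real.sin (2 * π * Y) ≠ 0) :
    DifferentiableAt ℝ (fun t : ℝ => Real.sin (2 * n * π * t) / Real.sin (2 * π * t)) Y ∧
    |deriv (fun t : ℝ => Real.sin (2 * n * π * t) / Real.sin (2 * π * t)) Y| ≤
      (2 * π / 3) * ((n : ℝ) - 1) * n * ((n : ℝ) + 1) * |Real.sin (2 * π * Y)| := by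
  obtain ⟨d, hd, hbound⟩ := exists_hasDerivAt_sin_nat_mul_div_sin n hY
  have hscale : HasDerivAt (fun t : ℝ => 2 * π * t) (2 * π) Y := by
    simpa using (hasDerivAt_id Y).const_mul (2 * π)
  have hg : HasDerivAt (fun t : ℝ => sin (2 * n * π * t) / sin (2 * π * t)) (d * (2 * π)) Y := by
    have hfun : (fun t : ℝ => sin (2 * n * π * t) / sin (2 * π * t)) =
        (fun x => sin (n * x) / sin x) ∘ fun t => 2 * π * t := by
      funext t; simp only [Function.comp_apply]; ring_nf
    rw [hfun]
    exact hd.comp Y hscale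
  refine ⟨hg.differentiableAt, ?_⟩
  rw [hg.deriv, abs_mul, abs_of_pos (by positivity : (0 : ℝ) < 2 * π)]
  calc |d| * (2 * π) ≤ n * (n ^ 2 - 1) / 3 * |sin (2 * π * Y)| * (2 * π) := by gcongr
    _ = _ := by ring

theorem dirichlet_quotient_derivative_bound (n : ℕ) (hn : 0 < n) (Y : ℝ)
    (hY : Real.sin (2 * π * Y) ≠ 0) :
    DifferentiableAt ℝ (fun t : ℝ => Real.sin (2 * n * π * t) / Real.sin (2 * π * t)) Y ∧
    |deriv (fun t : ℝ => Real.sin (2 * n * π * t) / Real.sin (2 * π * t)) Y| ≤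
      (2 * π / 3) * ((n : ℝ) - 1) * n * ((n : ℝ) + 1) * |Real.sin (2 * π * Y)| :=
  dirichlet_quotient_derivative_bound_general n Y hY
end
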